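/- arXiv:2206.13466 — 5 statements merged into one kernel-verified Lean document; each statement's English description precedes it below -/
import Mathlib

section
/- Let G be a finite group acting transitively on a finite set X, and let H be a subgroup of G of index 2 such that H also acts transitively on X. If every element of G \ H has at least one fixed point in X, then every element of G \ H has exactly one fixed point in X. -/
/-!
Since `H` acts transitively, so does `G`, and Burnside's lemma for both actions gives
`∑_{g ∈ G} |Fix g| = |G|` and `∑_{h ∈ H} |Fix h| = |H|`. Hence the elements outside `H` have
exactly one fixed point on average, and since each of them has at least one, each has exactly one.
-/

open MulAction Finset

namespace MulAction

variable {G X : Type*} [Group G] [MulAction G X] [Fintype G] [Finite X] [Nonempty X]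

theorem sum_card_fixedBy_of_isPretransitive [IsPretransitive G X] :
    ∑ g : G, Nat.card (fixedBy X g) = Fintype.card G := by
  classical
  have : Fintype X := Fintype.ofFinite X
  have : Subsingleton (orbitRel.Quotient G X) :=
    (pretransitive_iff_subsingleton_quotient G X).mp inferInstance
  have hone : Fintype.card (orbitRel.Quotient G X) = 1 :=
    Fintype.card_le_one_iff_subsingleton.mpr this |>.antisymm
      (Fintype.card_pos_iff.mpr (.map (Quotient.mk _) ‹Nonempty X›))
  simpa [Nat.card_eq_fintype_card, hone] using sum_card_fixedBy_eq_card_orbits_mul_card_group G X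

theorem sum_card_fixedBy_compl_eq_card_of_isPretransitive (H : Subgroup G)
    [DecidablePred (· ∈ H)] [IsPretransitive H X] :
    ∑ g ∈ univ.filter (· ∉ H), Nat.card (fixedBy X g) = #(univ.filter (· ∉ H)) := by
  have : IsPretransitive G X := .of_isScalarTower H
  have hH :
      ∑ g ∈ univ.filter (· ∈ H), Nat.card (fixedBy X g) = #(univ.filter (· ∈ H)) := by
    rw [sum_subtype _ (p := (· ∈ H)) (by simp), ← Fintype.card_subtype]
    exact sum_card_fixedBy_of_isPretransitive
  have hG := sum_card_fixedBy_of_isPretransitive (G := G) (X := X)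
  rw [← sum_filter_add_sum_filter_not univ (· ∈ H), hH, ← card_univ,
    ← card_filter_add_card_filter_not (s := univ) (· ∈ H)] at hG
  exact Nat.add_left_cancel hG

end MulAction

theorem unique_fixed_point_of_index_two_general (G X : Type*) [Group G] [Fintype G]
    [Fintype X] [MulAction G X]
    (H : Subgroup G)
    (hHtrans : ∀ x y : X, ∃ h ∈ H, h • x = y)
    (hfix : ∀ g : G, g ∉ H → ∃ x : X, g • x = x) :
    ∀ g : G, g ∉ H → ∃! x : X, g • x = x := by
  classical
  intro g hg
  have : Nonempty X := ⟨(hfix g hg).choose⟩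
  have : IsPretransitive H X :=
    ⟨fun x y => by obtain ⟨h, hh, rfl⟩ := hHtrans x y; exact ⟨⟨h, hh⟩, rfl⟩⟩
  have hpos : ∀ g ∈ univ.filter (· ∉ H), 1 ≤ Nat.card (fixedBy X g) := fun g hg => by
    obtain ⟨x, hx⟩ := hfix g (mem_filter.mp hg).2
    exact Nat.card_pos_iff.mpr ⟨⟨x, hx⟩, inferInstance⟩
  have hsum :
      ∑ _ ∈ univ.filter (· ∉ H), 1 =
        ∑ g ∈ univ.filter (· ∉ H), Nat.card (fixedBy X g) := by
    rw [sum_card_fixedBy_compl_eq_card_of_isPretransitive H, card_eq_sum_ones]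
  have hone : Nat.card (fixedBy X g) = 1 :=
    ((sum_eq_sum_iff_of_le hpos).mp hsum g (mem_filter.mpr ⟨mem_univ g, hg⟩)).symm
  obtain ⟨⟨x, hx⟩, hunique⟩ := Nat.card_eq_one_iff_exists.mp hone
  exact ⟨x, hx, fun y hy => congrArg Subtype.val (hunique ⟨y, hy⟩)⟩

/-- If `G` acts transitively on `X`, `H ≤ G` has index 2 and also acts transitively,
and every element outside `H` has a fixed point, then every element outside `H`
has exactly one fixed point. -/
theorem unique_fixed_point_of_index_two (G X : Type*) [Group G] [Fintype G]
    [Fintype X] [MulAction G X] [MulAction.IsPretransitive G X]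
    (H : Subgroup G) (hH : H.index = 2)
    (hHtrans : ∀ x y : X, ∃ h ∈ H, h • x = y)
    (hfix : ∀ g : G, g ∉ H → ∃ x : X, g • x = x) :
    ∀ g : G, g ∉ H → ∃! x : X, g • x = x :=
  unique_fixed_point_of_index_two_general G X H hHtrans hfix
end

section
/- Let G be a finite group acting on a finite set X of even cardinality, and let H ≤ G be a subgroup of index 2. Then it is impossible that every element of G \ H has exactly one fixed point in X. -/
/-!
Pick `ψ ∉ H` and write the order of the permutation of `X` induced by `ψ` as `2 ^ k * m` with `m`
odd. Since squares lie in `H`, the odd power `ψ ^ m` is still outside `H`, and it acts on `X` by a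
permutation of order dividing `2 ^ k`. All cycles of such a permutation have even length except
its fixed points, so it has as many fixed points as `|X|` modulo 2: an even number, never one.
-/

open Equiv

theorem Subgroup.odd_pow_mem_iff_of_index_two {G : Type*} [Group G] {H : Subgroup G}
    (hH : H.index = 2) {m : ℕ} (hm : Odd m) (g : G) : g ^ m ∈ H ↔ g ∈ H := by
  obtain ⟨t, rfl⟩ := hm
  rw [pow_succ, pow_mul, mul_mem_iff_of_index_two hH]
  simp only [H.pow_mem (sq_mem_of_index_two hH g) t, true_iff]

theorem IsOfFinOrder.exists_odd_pow_pow_two_pow_eq_one {M : Type*} [Monoid M] {x : M}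
    (hx : IsOfFinOrder x) : ∃ m k : ℕ, Odd m ∧ (x ^ m) ^ 2 ^ k = 1 := by
  obtain ⟨k, m, hm, hord⟩ := Nat.exists_eq_two_pow_mul_odd hx.orderOf_pos.ne'
  refine ⟨m, k, hm, ?_⟩
  rw [← pow_mul, mul_comm, ← hord, pow_orderOf_eq_one]

theorem Equiv.Perm.not_existsUnique_fixed_of_pow_two_pow_eq_one {α : Type*} [Fintype α]
    (hα : Even (Fintype.card α)) {σ : Perm α} {k : ℕ} (hσ : σ ^ 2 ^ k = 1) :
    ¬ ∃! a, σ a = a := by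
  classical
  rintro ⟨a, ha, hunique⟩
  have hfixed : σ.supportᶜ = {a} := by
    ext b
    simpa only [Finset.mem_compl, mem_support, not_not, Finset.mem_singleton] using
      ⟨hunique b, fun hb => hb ▸ ha⟩
  have hmod := card_compl_support_modEq (p := 2) hσ
  rw [hfixed, Finset.card_singleton] at hmod
  rw [Nat.ModEq, Nat.even_iff.1 hα] at hmod
  exact absurd hmod (by decide)

theorem no_unique_fixed_point_of_even_card_general (G X : Type*) [Group G]
    [Fintype X] [MulAction G X]
    (hX : Even (Fintype.card X))
    (H : Subgroup G) (hH : H.index = 2) :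
    ¬ (∀ g : G, g ∉ H → ∃! x : X, g • x = x) := by
  intro h
  obtain ⟨ψ, hψ⟩ : ∃ ψ : G, ψ ∉ H :=
    SetLike.exists_not_mem_of_ne_top H fun hHtop => by
      rw [hHtop, Subgroup.index_top] at hH
      omega
  obtain ⟨m, k, hm, hσ⟩ :=
    (isOfFinOrder_of_finite (MulAction.toPermHom G X ψ)).exists_odd_pow_pow_two_pow_eq_one
  rw [← map_pow] at hσ
  exact Perm.not_existsUnique_fixed_of_pow_two_pow_eq_one hX hσ
    (h (ψ ^ m) ((H.odd_pow_mem_iff_of_index_two hH hm ψ).not.2 hψ))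

/-- If `|X|` is even and `H ≤ G` has index 2, it is impossible that every element
of `G \ H` has exactly one fixed point in `X`. -/
theorem no_unique_fixed_point_of_even_card (G X : Type*) [Group G] [Fintype G]
    [Fintype X] [MulAction G X]
    (hX : Even (Fintype.card X))
    (H : Subgroup G) (hH : H.index = 2) :
    ¬ (∀ g : G, g ∉ H → ∃! x : X, g • x = x) :=
  no_unique_fixed_point_of_even_card_general G X hX H hH
end

section
/- Let f be a monic squarefree polynomial over ℤ with splitting field L over ℚ and Galois group G = Gal(L/ℚ), with roots α_1, ..., α_n, and set H_i = Gal(L/ℚ(α_i)). If G = ⋃_{i=1}^n H_i (i.e., every element of G fixes some root of f), then for all but finitely many primes p, the reduction f mod p has a root in 𝔽_p. -/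
/-!
Let `L` be the splitting field and `p` any prime. Choose a prime `Q` of `𝓞 L` above `p` and an
arithmetic Frobenius `σ ∈ Gal(L/ℚ)` at `Q`, i.e. `σ x ≡ x ^ p (mod Q)`; such a `σ` exists at every
prime, ramified or not. By hypothesis `σ` fixes a root `α` of `f`, which is integral since `f` is
monic, so `α ≡ α ^ p (mod Q)`. Hence `α mod Q` lies in the prime field `𝔽_p` of `𝓞 L ⧸ Q` and is
a root of `f mod p`. So `f` has a root modulo every prime, and the exceptional set is empty.
-/

open Polynomial NumberField

theorem exists_eval_zmod_eq_zero_of_pow_eq_self {K : Type*} [Field K] (p : ℕ) [Fact p.Prime]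
    [CharP K p] {f : ℤ[X]} {x : K} (hxp : x ^ p = x) (hx : aeval x f = 0) :
    ∃ c : ZMod p, (f.map (Int.castRingHom (ZMod p))).eval c = 0 := by
  obtain ⟨c, rfl⟩ : x ∈ (ZMod.castHom dvd_rfl K).fieldRange := by
    rwa [ZMod.fieldRange_castHom_eq_bot, Subfield.mem_bot_iff_pow_eq_self]
  refine ⟨c, (ZMod.castHom dvd_rfl K).injective ?_⟩
  rw [map_zero, ← hx, eval_map, hom_eval₂, aeval_def,
    RingHom.ext_int ((ZMod.castHom _ K).comp _) (algebraMap ℤ K)]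

theorem Ideal.charP_quotient_of_liesOver {S : Type*} [CommRing S] (p : ℕ) [Fact p.Prime]
    (Q : Ideal S) [Q.IsPrime] [Q.LiesOver (Ideal.span {(p : ℤ)})] : CharP (S ⧸ Q) p := by
  refine (CharP.charP_iff_prime_eq_zero Fact.out).mpr ?_
  rw [← map_natCast (Ideal.Quotient.mk Q), Ideal.Quotient.eq_zero_iff_mem,
    ← map_natCast (algebraMap ℤ S), ← Ideal.mem_of_liesOver Q (Ideal.span {(p : ℤ)})]
  exact Ideal.mem_span_singleton_self _

attribute [local instance] Ideal.Quotient.field in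
theorem NumberField.exists_eval_zmod_eq_zero_of_forall_gal_fixes_root {L : Type*} [Field L]
    [NumberField L] [IsGalois ℚ L] {f : ℤ[X]} (hm : f.Monic)
    (hcov : ∀ σ : Gal(L/ℚ), ∃ α : L, aeval α f = 0 ∧ σ α = α) (p : ℕ) [Fact p.Prime] :
    ∃ c : ZMod p, (f.map (Int.castRingHom (ZMod p))).eval c = 0 := by
  obtain ⟨Q, _, _⟩ := Ideal.exists_maximal_ideal_liesOver_of_isIntegral (S := 𝓞 L)
    (Ideal.span {(p : ℤ)})
  have := Ideal.charP_quotient_of_liesOver p Q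
  obtain ⟨σ, hσ⟩ := IsArithFrobAt.exists_of_isInvariant ℤ Gal(L/ℚ) Q
  obtain ⟨α, hα, hσα⟩ := hcov σ
  let a : 𝓞 L := ⟨α, f, hm, by rwa [← aeval_def]⟩
  have ha : aeval a f = 0 :=
    RingOfIntegers.coe_injective (by rwa [← aeval_algebraMap_apply, map_zero])
  have hcard : Nat.card (ℤ ⧸ Q.under ℤ) = p := by
    rw [← Ideal.over_def Q (Ideal.span {(p : ℤ)}), Int.card_ideal_quot]
  refine exists_eval_zmod_eq_zero_of_pow_eq_self p (x := Ideal.Quotient.mk Q a) ?_ ?_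
  · rw [← hcard, ← hσ.mk_apply]
    exact congrArg _ (Subtype.ext hσα)
  · rw [← Ideal.Quotient.mkₐ_eq_mk ℤ, aeval_algHom_apply, ha, map_zero]

theorem root_mod_aae_primes_of_galois_cover_general (f : Polynomial ℤ) (hm : f.Monic)
    (hcov : ∀ σ : ((f.map (algebraMap ℤ ℚ)).SplittingField ≃ₐ[ℚ]
        (f.map (algebraMap ℤ ℚ)).SplittingField),
      ∃ α : (f.map (algebraMap ℤ ℚ)).SplittingField,
        Polynomial.aeval α (f.map (algebraMap ℤ ℚ)) = 0 ∧ σ α = α) :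
    {p : ℕ | p.Prime ∧ ∀ x : ZMod p, (f.map (Int.castRingHom (ZMod p))).eval x ≠ 0}.Finite := by
  -- The `ℚ`-algebra structure in the statement is `DivisionRing.toRatAlgebra`, for which
  -- instance search does not find `Normal`.
  have : Normal ℚ (f.map (algebraMap ℤ ℚ)).SplittingField := SplittingField.instNormal _
  have : IsGalois ℚ (f.map (algebraMap ℤ ℚ)).SplittingField := ⟨⟩
  have : NumberField (f.map (algebraMap ℤ ℚ)).SplittingField := ⟨⟩
  refine Set.finite_empty.subset fun p ⟨hp, hnoroot⟩ => ?_
  have : Fact p.Prime := ⟨hp⟩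
  obtain ⟨c, hc⟩ := NumberField.exists_eval_zmod_eq_zero_of_forall_gal_fixes_root hm
    (fun σ => (hcov σ).imp fun α ⟨hα, hσα⟩ => ⟨by rwa [aeval_map_algebraMap] at hα, hσα⟩) p
  exact hnoroot c hc

/-- If every element of the Galois group of a monic squarefree integer polynomial
fixes a root, then the polynomial has a root modulo all but finitely many primes. -/
theorem root_mod_aae_primes_of_galois_cover (f : Polynomial ℤ) (hm : f.Monic)
    (hsf : Squarefree f)
    (hcov : ∀ σ : ((f.map (algebraMap ℤ ℚ)).SplittingField ≃ₐ[ℚ]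
        (f.map (algebraMap ℤ ℚ)).SplittingField),
      ∃ α : (f.map (algebraMap ℤ ℚ)).SplittingField,
        Polynomial.aeval α (f.map (algebraMap ℤ ℚ)) = 0 ∧ σ α = α) :
    {p : ℕ | p.Prime ∧ ∀ x : ZMod p, (f.map (Int.castRingHom (ZMod p))).eval x ≠ 0}.Finite :=
  root_mod_aae_primes_of_galois_cover_general f hm hcov
end

section
/- Let p be an odd prime and let ℓ_1 < ℓ_2 < ... < ℓ_n be distinct primes with n ≥ p. Let L = ℚ(ℓ_1^{1/p}, ..., ℓ_n^{1/p}, ζ_p). Then every element ψ of Gal(L/ℚ) fixes some element of the form ζ_p^{ν} (ℓ_j ℓ_{j+1} ⋯ ℓ_k)^{1/p} for some 1 ≤ j ≤ k ≤ n and ν ∈ {0,...,p−1}; in particular ψ fixes (ℓ_j ⋯ ℓ_k)^{1/p} for some interval [j,k]. -/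
/-!
A field automorphism fixing `x^p` sends `x` to `ω x` with `ω` a `p`-th root of unity, and a field
has at most `p` of those. Among the `n + 1 > p` prefix products of the ratios `ω_i = ψ(x_i)/x_i`
two coincide, so the `ω_i` over some interval multiply to `1`, and `ψ` fixes the product of the
`x_i = ℓ_i^{1/p}` over that interval.
-/

open Finset

theorem exists_prod_Icc_eq_one_of_card_le {G : Type*} [CommGroup G] [Finite G] {n : ℕ}
    (hn : Nat.card G ≤ n) (g : ℕ → G) : ∃ a b, a ≤ b ∧ b < n ∧ ∏ i ∈ Icc a b, g i = 1 := by
  have hprefix : ¬ (fun m : Fin (n + 1) => ∏ i ∈ range m, g i).Injective := fun hinj => by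
    simpa using (Nat.card_le_card_of_injective _ hinj).trans hn
  obtain ⟨a, b, heq, hne⟩ := Function.not_injective_iff.mp hprefix
  wlog hab : a < b generalizing a b
  · exact this b a heq.symm hne.symm (hne.lt_or_gt.resolve_left hab)
  obtain ⟨c, hc⟩ := Nat.exists_eq_add_of_lt hab
  refine ⟨a, a + c, le_self_add, by omega, ?_⟩
  rw [← Finset.Ico_add_one_right_eq_Icc, ← hc, prod_Ico_eq_div g hab.le]
  exact div_eq_one.mpr heq.symm

theorem Fin.exists_prod_Icc_eq_one_of_card_le {G : Type*} [CommGroup G] [Finite G] {n : ℕ}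
    (hn : Nat.card G ≤ n) (f : Fin n → G) :
    ∃ j k : Fin n, j ≤ k ∧ ∏ i ∈ Icc j k, f i = 1 := by
  let g : ℕ → G := fun m => if h : m < n then f ⟨m, h⟩ else 1
  obtain ⟨a, b, hab, hbn, hprod⟩ := _root_.exists_prod_Icc_eq_one_of_card_le hn g
  refine ⟨⟨a, hab.trans_lt hbn⟩, ⟨b, hbn⟩, hab, ?_⟩
  calc ∏ i ∈ Icc ⟨a, _⟩ ⟨b, hbn⟩, f i
      = ∏ m ∈ (Icc ⟨a, hab.trans_lt hbn⟩ ⟨b, hbn⟩).map Fin.valEmbedding, g m := by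
        rw [prod_map]; exact prod_congr rfl fun i _ => by simp [g]
    _ = 1 := by rw [Fin.map_valEmbedding_Icc]; exact hprod

theorem exists_map_prod_Icc_eq_self_of_map_pow_eq_self {K F : Type*} [Field K] [FunLike F K K]
    [MonoidHomClass F K K] (σ : F) {p n : ℕ} [NeZero p] (hpn : p ≤ n) (x : Fin n → K)
    (hx : ∀ i, x i ≠ 0) (hfix : ∀ i, σ (x i ^ p) = x i ^ p) :
    ∃ j k : Fin n, j ≤ k ∧ σ (∏ i ∈ Icc j k, x i) = ∏ i ∈ Icc j k, x i := by
  have hroot : ∀ i, (σ (x i) / x i) ^ p = 1 := fun i => by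
    rw [div_pow, ← map_pow, hfix i, div_self (pow_ne_zero _ (hx i))]
  let ω : Fin n → rootsOfUnity p K := fun i => rootsOfUnity.mkOfPowEq _ (hroot i)
  have hσ : ∀ i, σ (x i) = ((ω i : Kˣ) : K) * x i := fun i => by
    simp [ω, div_mul_cancel₀ _ (hx i)]
  obtain ⟨j, k, hjk, hω⟩ := Fin.exists_prod_Icc_eq_one_of_card_le
    ((card_rootsOfUnity K p).trans hpn) ω
  refine ⟨j, k, hjk, ?_⟩
  calc σ (∏ i ∈ Icc j k, x i) = ∏ i ∈ Icc j k, ((ω i : Kˣ) : K) * x i := by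
        rw [map_prod]; exact prod_congr rfl fun i _ => hσ i
    _ = (((∏ i ∈ Icc j k, ω i : rootsOfUnity p K) : Kˣ) : K) * ∏ i ∈ Icc j k, x i := by
        rw [prod_mul_distrib]; push_cast; rfl
    _ = ∏ i ∈ Icc j k, x i := by rw [hω]; simp

theorem galois_fixes_consecutive_root_general (p : ℕ) (hp : p.Prime)
    (n : ℕ) (hn : p ≤ n) (ℓ : Fin n → ℕ) (hℓ : ∀ i, (ℓ i).Prime) (ζ : ℂ)
    (ψ : (IntermediateField.adjoin ℚ
        ({ζ} ∪ Set.range fun i : Fin n => (((ℓ i : ℝ) ^ ((p : ℝ)⁻¹) : ℝ) : ℂ))) ≃ₐ[ℚ]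
      (IntermediateField.adjoin ℚ
        ({ζ} ∪ Set.range fun i : Fin n => (((ℓ i : ℝ) ^ ((p : ℝ)⁻¹) : ℝ) : ℂ)))) :
    ∃ j k : Fin n, j ≤ k ∧
      ∃ α : (IntermediateField.adjoin ℚ
        ({ζ} ∪ Set.range fun i : Fin n => (((ℓ i : ℝ) ^ ((p : ℝ)⁻¹) : ℝ) : ℂ))),
        (α : ℂ) = ∏ i ∈ Finset.Icc j k, (((ℓ i : ℝ) ^ ((p : ℝ)⁻¹) : ℝ) : ℂ) ∧
        ψ α = α := by
  have : NeZero p := ⟨hp.ne_zero⟩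
  let X : Fin n → IntermediateField.adjoin ℚ
      ({ζ} ∪ Set.range fun i : Fin n => (((ℓ i : ℝ) ^ ((p : ℝ)⁻¹) : ℝ) : ℂ)) :=
    fun i => ⟨_, IntermediateField.subset_adjoin ℚ _ (Or.inr ⟨i, rfl⟩)⟩
  have hXp : ∀ i, X i ^ p = (ℓ i : _) := fun i => Subtype.ext <| by
    push_cast [X]
    rw [← Complex.ofReal_pow, Real.rpow_inv_natCast_pow (Nat.cast_nonneg _) hp.ne_zero,
      Complex.ofReal_natCast]
  have hX0 : ∀ i, X i ≠ 0 := fun i h => (hℓ i).ne_zero <| by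
    exact_mod_cast (hXp i).symm.trans (by rw [h, zero_pow hp.ne_zero] : X i ^ p = 0)
  obtain ⟨j, k, hjk, hfix⟩ := exists_map_prod_Icc_eq_self_of_map_pow_eq_self ψ hn X hX0
    fun i => by rw [hXp, map_natCast]
  exact ⟨j, k, hjk, _, SubmonoidClass.coe_finsetProd _ _, hfix⟩

/-- Every element of `Gal(ℚ(ℓ₁^{1/p},…,ℓ_n^{1/p},ζ_p)/ℚ)`, where `n ≥ p` and the
`ℓᵢ` are distinct primes, fixes the `p`-th root of a product of consecutive `ℓᵢ`. -/
theorem galois_fixes_consecutive_root (p : ℕ) (hp : p.Prime) (hodd : Odd p)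
    (n : ℕ) (hn : p ≤ n) (ℓ : Fin n → ℕ) (hℓ : ∀ i, (ℓ i).Prime)
    (hmono : StrictMono ℓ) (ζ : ℂ) (hζ : IsPrimitiveRoot ζ p)
    (ψ : (IntermediateField.adjoin ℚ
        ({ζ} ∪ Set.range fun i : Fin n => (((ℓ i : ℝ) ^ ((p : ℝ)⁻¹) : ℝ) : ℂ))) ≃ₐ[ℚ]
      (IntermediateField.adjoin ℚ
        ({ζ} ∪ Set.range fun i : Fin n => (((ℓ i : ℝ) ^ ((p : ℝ)⁻¹) : ℝ) : ℂ)))) :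
    ∃ j k : Fin n, j ≤ k ∧
      ∃ α : (IntermediateField.adjoin ℚ
        ({ζ} ∪ Set.range fun i : Fin n => (((ℓ i : ℝ) ^ ((p : ℝ)⁻¹) : ℝ) : ℂ))),
        (α : ℂ) = ∏ i ∈ Finset.Icc j k, (((ℓ i : ℝ) ^ ((p : ℝ)⁻¹) : ℝ) : ℂ) ∧
        ψ α = α :=
  galois_fixes_consecutive_root_general p hp n hn ℓ hℓ ζ ψ
end

section
/- Let g, h ∈ ℤ[X] be monic irreducible polynomials of degree ≥ 2 with splitting fields K and L over ℚ satisfying K ∩ L = ℚ. Then there exists an automorphism ψ of the splitting field of gh over ℚ that fixes no root of g and no root of h. -/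
/-!
The Galois group of an irreducible separable polynomial of degree at least 2 acts transitively
on its at least two roots, so Burnside's lemma yields an element moving every root. If the
splitting fields `K`, `L` of `g`, `h` inside the splitting field `M` of `gh` meet in `ℚ`, then
the Galois correspondence turns `K ⊓ L = ⊥` into `Gal(M/K) ⊔ Gal(M/L) = Gal(M/ℚ)`, and as both
subgroups are normal every automorphism is a product of one fixing `K` and one fixing `L`. Hence for any `σ`,
`τ` some `ψ` agrees with `σ` on `K` and with `τ` on `L`; taking for `σ`, `τ` elements moving all
roots of `g`, resp. `h`, the automorphism `ψ` moves all roots of `gh`.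
-/

open Polynomial IntermediateField

theorem Polynomial.rootSet_map {T : Type*} [CommRing T] (S : Type*) {R : Type*} [CommRing S]
    [CommRing R] [IsDomain R] [Algebra T S] [Algebra S R] [Algebra T R] [IsScalarTower T S R]
    (p : T[X]) : (p.map (algebraMap T S)).rootSet R = p.rootSet R := by
  classical
  rw [rootSet_def, rootSet_def, aroots_map]

theorem Polynomial.irreducible_map_rat_of_irreducible {g : ℤ[X]} (hg : Irreducible g)
    (hdeg : g.natDegree ≠ 0) : Irreducible (g.map (algebraMap ℤ ℚ)) :=
  (IsPrimitive.Int.irreducible_iff_irreducible_map_cast (hg.isPrimitive hdeg)).mp hg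

theorem MulAction.exists_forall_smul_ne_of_isPretransitive (G X : Type*) [Group G] [Finite G]
    [Finite X] [MulAction G X] [IsPretransitive G X] (hX : 1 < Nat.card X) :
    ∃ g : G, ∀ x : X, g • x ≠ x := by
  classical
  have : Fintype G := Fintype.ofFinite G
  have : Fintype X := Fintype.ofFinite X
  have : Nonempty X := (Nat.card_pos_iff.mp (by omega)).1
  have : Subsingleton (orbitRel.Quotient G X) :=
    (pretransitive_iff_subsingleton_quotient G X).mp inferInstance
  have : Unique (orbitRel.Quotient G X) :=
    uniqueOfSubsingleton (Quotient.mk _ (Classical.arbitrary X))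
  by_contra! hfix
  have burnside := sum_card_fixedBy_eq_card_orbits_mul_card_group G X
  rw [Fintype.card_unique, one_mul, ← Finset.card_univ, Finset.card_eq_sum_ones] at burnside
  have : ∑ _g : G, 1 < ∑ g : G, Fintype.card (fixedBy X g) := by
    refine Finset.sum_lt_sum (fun g _ => ?_) ⟨1, Finset.mem_univ _, ?_⟩
    · obtain ⟨x, hx⟩ := hfix g
      exact Fintype.card_pos_iff.mpr ⟨⟨x, hx⟩⟩
    · simpa [fixedBy_one_eq_univ, Nat.card_eq_fintype_card] using hX
  omega

variable {F E : Type*} [Field F] [Field E] [Algebra F E]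

theorem Polynomial.exists_algEquiv_forall_mem_rootSet_ne [Normal F E] {p : F[X]}
    (hirr : Irreducible p) (hsep : p.Separable) (hdeg : 2 ≤ p.natDegree)
    (hsplit : (p.map (algebraMap F E)).Splits) :
    ∃ σ : Gal(E/F), ∀ x ∈ p.rootSet E, σ x ≠ x := by
  have := Fact.mk hsplit
  have := Gal.galAction_isPretransitive p E hirr
  obtain ⟨φ, hφ⟩ := MulAction.exists_forall_smul_ne_of_isPretransitive p.Gal (p.rootSet E)
    (by rwa [Nat.card_eq_fintype_card, card_rootSet_eq_natDegree hsep hsplit])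
  obtain ⟨σ, rfl⟩ := Gal.restrict_surjective p E φ
  refine ⟨σ, fun x hx hσx => hφ ⟨x, hx⟩ (Subtype.ext ?_)⟩
  rw [Gal.restrict_smul, hσx]

theorem IntermediateField.fixingSubgroup_inf [FiniteDimensional F E] [IsGalois F E]
    (K L : IntermediateField F E) :
    (K ⊓ L).fixingSubgroup = K.fixingSubgroup ⊔ L.fixingSubgroup :=
  congrArg OrderDual.ofDual (IsGalois.intermediateFieldEquivSubgroup.map_inf K L)

theorem IntermediateField.exists_algEquiv_eqOn_eqOn_of_inf_eq_bot [FiniteDimensional F E]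
    [IsGalois F E] {K L : IntermediateField F E} [Normal F K] [Normal F L] (hKL : K ⊓ L = ⊥)
    (σ τ : Gal(E/F)) : ∃ ψ : Gal(E/F), (∀ x ∈ K, ψ x = σ x) ∧ ∀ x ∈ L, ψ x = τ x := by
  have : IsGalois F K := ⟨⟩
  have : IsGalois F L := ⟨⟩
  have hmem : σ⁻¹ * τ ∈ (↑(K.fixingSubgroup ⊔ L.fixingSubgroup) : Set Gal(E/F)) := by
    simp [← fixingSubgroup_inf, hKL]
  rw [Subgroup.mul_normal] at hmem
  obtain ⟨κ, hκ, μ, hμ, hκμ : κ * μ = σ⁻¹ * τ⟩ := hmem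
  refine ⟨σ * κ, fun x hx => ?_, fun x hx => ?_⟩
  · rw [AlgEquiv.mul_apply, (mem_fixingSubgroup_iff _ κ).mp hκ x hx]
  · rw [show σ * κ = τ * μ⁻¹ by rw [eq_mul_inv_iff_mul_eq, mul_assoc, hκμ, mul_inv_cancel_left],
      AlgEquiv.mul_apply, (mem_fixingSubgroup_iff _ _).mp (inv_mem hμ) x hx]

section Tower

variable {Ω : Type*} [Field Ω] [Algebra F Ω] [Algebra E Ω] [IsScalarTower F E Ω] {p q : F[X]}

theorem Polynomial.algebraMap_mem_rootSet_iff (hp : (p.map (algebraMap F E)).Splits) {x : E} :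
    algebraMap E Ω x ∈ p.rootSet Ω ↔ x ∈ p.rootSet E := by
  rw [← hp.image_rootSet_algebraMap (B := Ω)]
  exact (algebraMap E Ω).injective.mem_set_image

theorem IntermediateField.map_adjoin_rootSet (hp : (p.map (algebraMap F E)).Splits) :
    (adjoin F (p.rootSet E)).map (IsScalarTower.toAlgHom F E Ω) = adjoin F (p.rootSet Ω) := by
  rw [adjoin_map, hp.image_rootSet]

theorem Polynomial.exists_algEquiv_forall_mem_rootSet_ne_of_inf_eq_bot [FiniteDimensional F E]
    [IsGalois F E] (hp : Irreducible p) (hq : Irreducible q)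
    (hpsep : p.Separable) (hqsep : q.Separable) (hpdeg : 2 ≤ p.natDegree)
    (hqdeg : 2 ≤ q.natDegree) (hpsplit : (p.map (algebraMap F E)).Splits)
    (hqsplit : (q.map (algebraMap F E)).Splits)
    (hpq : adjoin F (p.rootSet Ω) ⊓ adjoin F (q.rootSet Ω) = ⊥) :
    ∃ ψ : Gal(E/F), ∀ x : E,
      algebraMap E Ω x ∈ p.rootSet Ω ∨ algebraMap E Ω x ∈ q.rootSet Ω → ψ x ≠ x := by
  obtain ⟨σ, hσ⟩ := exists_algEquiv_forall_mem_rootSet_ne hp hpsep hpdeg hpsplit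
  obtain ⟨τ, hτ⟩ := exists_algEquiv_forall_mem_rootSet_ne hq hqsep hqdeg hqsplit
  have hpqE : adjoin F (p.rootSet E) ⊓ adjoin F (q.rootSet E) = ⊥ := by
    apply IntermediateField.map_injective (IsScalarTower.toAlgHom F E Ω)
    rw [IntermediateField.map_inf, map_adjoin_rootSet hpsplit, map_adjoin_rootSet hqsplit, hpq,
      IntermediateField.map_bot]
  have := adjoin_rootSet_isSplittingField hpsplit
  have := adjoin_rootSet_isSplittingField hqsplit
  have := Normal.of_isSplittingField (E := adjoin F (p.rootSet E)) p
  have := Normal.of_isSplittingField (E := adjoin F (q.rootSet E)) q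
  obtain ⟨ψ, hψσ, hψτ⟩ := exists_algEquiv_eqOn_eqOn_of_inf_eq_bot hpqE σ τ
  refine ⟨ψ, ?_⟩
  rintro x (hx | hx)
  · rw [algebraMap_mem_rootSet_iff hpsplit] at hx
    rw [hψσ x (subset_adjoin F _ hx)]
    exact hσ x hx
  · rw [algebraMap_mem_rootSet_iff hqsplit] at hx
    rw [hψτ x (subset_adjoin F _ hx)]
    exact hτ x hx

end Tower

theorem exists_automorphism_fixing_no_root_general (g h : Polynomial ℤ)
    (hgirr : Irreducible g) (hhirr : Irreducible h)
    (hgdeg : 2 ≤ g.natDegree) (hhdeg : 2 ≤ h.natDegree)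
    (hKL : IntermediateField.adjoin ℚ (g.rootSet ℂ) ⊓
      IntermediateField.adjoin ℚ (h.rootSet ℂ) = ⊥) :
    ∃ ψ : (IntermediateField.adjoin ℚ ((g * h).rootSet ℂ)) ≃ₐ[ℚ]
        (IntermediateField.adjoin ℚ ((g * h).rootSet ℂ)),
      ∀ α : (IntermediateField.adjoin ℚ ((g * h).rootSet ℂ)),
        ((α : ℂ) ∈ g.rootSet ℂ ∨ (α : ℂ) ∈ h.rootSet ℂ) → ψ α ≠ α := by
  set M := adjoin ℚ ((g * h).rootSet ℂ)
  set p := g.map (algebraMap ℤ ℚ)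
  set q := h.map (algebraMap ℤ ℚ)
  have hp : Irreducible p := irreducible_map_rat_of_irreducible hgirr (by omega)
  have hq : Irreducible q := irreducible_map_rat_of_irreducible hhirr (by omega)
  have : IsSplittingField ℚ M (p * q) := by
    have := adjoin_rootSet_isSplittingField (K := ℚ) (p := (g * h).map (algebraMap ℤ ℚ))
      (IsAlgClosed.splits (k := ℂ) _)
    rwa [rootSet_map, Polynomial.map_mul] at this
  have : FiniteDimensional ℚ M := IsSplittingField.finiteDimensional M (p * q)
  have : Normal ℚ M := Normal.of_isSplittingField (p * q)
  have : IsGalois ℚ M := ⟨⟩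
  obtain ⟨hpsplit, hqsplit⟩ := (splits_mul (map_ne_zero hp.ne_zero) (map_ne_zero hq.ne_zero)).mp
    (by simpa only [Polynomial.map_mul] using IsSplittingField.splits M (p * q))
  rw [← rootSet_map ℚ g, ← rootSet_map ℚ h] at hKL ⊢
  exact exists_algEquiv_forall_mem_rootSet_ne_of_inf_eq_bot hp hq hp.separable hq.separable
    (by rwa [natDegree_map_eq_of_injective (algebraMap ℤ ℚ).injective_int])
    (by rwa [natDegree_map_eq_of_injective (algebraMap ℤ ℚ).injective_int])
    hpsplit hqsplit hKL

/-- If `g`, `h` are monic irreducible integer polynomials of degree ≥ 2 whose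
splitting fields inside `ℂ` intersect in `ℚ`, then some element of the Galois
group of `gh` fixes no root of `g` and no root of `h`. -/
theorem exists_automorphism_fixing_no_root (g h : Polynomial ℤ)
    (hgm : g.Monic) (hhm : h.Monic) (hgirr : Irreducible g) (hhirr : Irreducible h)
    (hgdeg : 2 ≤ g.natDegree) (hhdeg : 2 ≤ h.natDegree)
    (hKL : IntermediateField.adjoin ℚ (g.rootSet ℂ) ⊓
      IntermediateField.adjoin ℚ (h.rootSet ℂ) = ⊥) :
    ∃ ψ : (IntermediateField.adjoin ℚ ((g * h).rootSet ℂ)) ≃ₐ[ℚ]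
        (IntermediateField.adjoin ℚ ((g * h).rootSet ℂ)),
      ∀ α : (IntermediateField.adjoin ℚ ((g * h).rootSet ℂ)),
        ((α : ℂ) ∈ g.rootSet ℂ ∨ (α : ℂ) ∈ h.rootSet ℂ) → ψ α ≠ α :=
  exists_automorphism_fixing_no_root_general g h hgirr hhirr hgdeg hhdeg hKL
end
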